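/- arXiv:1612.09382 — 2 statements merged into one kernel-verified Lean document; each statement's English description precedes it below -/
import Mathlib

section
/- If K = conv(C1 ∪ C2) with C1 ⊂ Π1 a circle in the plane Π1 and C2 a circle in a different plane, then the section K ∩ Π1 equals conv(C1 ∪ (conv(C2) ∩ Π1)). -/
noncomputable section
open scoped RealInnerProductSpace

abbrev E3 := EuclideanSpace ℝ (Fin 3)

/-- `Π` is an affine plane in `ℝ³`. -/
def IsPlane (P : AffineSubspace ℝ E3) : Prop := Module.finrank ℝ P.direction = 2

/-- `C` is a circle lying in the plane `P`. -/
def IsCircleIn (P : AffineSubspace ℝ E3) (C : Set E3) : Prop :=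
  ∃ (c : E3) (r : ℝ), c ∈ P ∧ 0 < r ∧ C = {x | x ∈ P ∧ dist x c = r}

lemma circle_nonempty {P : AffineSubspace ℝ E3} {C : Set E3} (hP : IsPlane P)
    (hC : IsCircleIn P C) : C.Nonempty := by
  obtain ⟨c, r, hc, hr, rfl⟩ := hC
  have hdir : P.direction ≠ ⊥ := by
    intro h
    rw [IsPlane, h] at hP
    simp at hP
  obtain ⟨v, hv, hv0⟩ := Submodule.exists_mem_ne_zero_of_ne_bot hdir
  have hnv : ‖v‖ ≠ 0 := norm_ne_zero_iff.2 hv0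
  refine ⟨(r / ‖v‖) • v +ᵥ c, P.vadd_mem_of_mem_direction (Submodule.smul_mem _ _ hv) hc, ?_⟩
  have : dist ((r / ‖v‖) • v +ᵥ c) c = ‖(r / ‖v‖) • v‖ := by
    simp [vadd_eq_add, dist_eq_norm]
  rw [this, norm_smul]
  rw [Real.norm_eq_abs, abs_div, abs_of_pos hr, abs_norm, div_mul_cancel₀ _ hnv]

lemma circle_subset {P : AffineSubspace ℝ E3} {C : Set E3}
    (hC : IsCircleIn P C) : C ⊆ (P : Set E3) := by
  obtain ⟨c, r, hc, hr, rfl⟩ := hC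
  intro x hx
  exact hx.1

/-- If `K = conv (C₁ ∪ C₂)` with `C₁ ⊆ Π₁`, `C₂ ⊆ Π₂` circles in distinct planes, then the
section `K ∩ Π₁` equals `conv (C₁ ∪ (conv C₂ ∩ Π₁))`. -/
theorem stmt_1 (P₁ P₂ : AffineSubspace ℝ E3) (hP₁ : IsPlane P₁) (hP₂ : IsPlane P₂)
    (hne : P₁ ≠ P₂) (C₁ C₂ : Set E3) (hC₁ : IsCircleIn P₁ C₁) (hC₂ : IsCircleIn P₂ C₂) :
    convexHull ℝ (C₁ ∪ C₂) ∩ (P₁ : Set E3)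
      = convexHull ℝ (C₁ ∪ (convexHull ℝ C₂ ∩ (P₁ : Set E3))) := by
  have hC₁ne := circle_nonempty hP₁ hC₁
  have hC₂ne := circle_nonempty hP₂ hC₂
  have hC₁P : C₁ ⊆ (P₁ : Set E3) := circle_subset hC₁
  have hconvP : Convex ℝ (P₁ : Set E3) := P₁.convex
  apply subset_antisymm
  · rintro x ⟨hxK, hxP⟩
    rw [convexHull_union hC₁ne hC₂ne, mem_convexJoin] at hxK
    obtain ⟨a, ha, b, hb, hseg⟩ := hxK
    obtain ⟨t₁, t₂, ht₁, ht₂, hsum, hx⟩ := hseg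
    have haP : a ∈ (P₁ : Set E3) := convexHull_min hC₁P hconvP ha
    have haRHS : a ∈ convexHull ℝ (C₁ ∪ (convexHull ℝ C₂ ∩ (P₁ : Set E3))) :=
      convexHull_mono Set.subset_union_left ha
    rcases eq_or_lt_of_le ht₂ with h0 | h0
    · have : x = a := by
        rw [← hx, ← h0]
        have : t₁ = 1 := by linarith
        simp [this]
      rw [this]; exact haRHS
    · have ht₂0 : t₂ ≠ 0 := ne_of_gt h0
      have key : x -ᵥ a = t₂ • (b - a) := by
        rw [← hx]
        simp only [vsub_eq_sub]
        have ht₁' : t₁ = 1 - t₂ := by linarith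
        rw [ht₁']
        module
      have hb' : b = t₂⁻¹ • (x -ᵥ a) +ᵥ a := by
        rw [key]
        simp only [vadd_eq_add, smul_smul, inv_mul_cancel₀ ht₂0, one_smul]
        rw [sub_add_cancel]
      have hbP : b ∈ (P₁ : Set E3) := by
        rw [hb']
        exact P₁.smul_vsub_vadd_mem t₂⁻¹ hxP haP haP
      have hbRHS : b ∈ convexHull ℝ (C₁ ∪ (convexHull ℝ C₂ ∩ (P₁ : Set E3))) :=
        subset_convexHull ℝ _ (Set.mem_union_right _ ⟨hb, hbP⟩)
      rw [← hx]
      exact (convex_convexHull ℝ _) haRHS hbRHS ht₁ ht₂ hsum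
  · apply convexHull_min
    · rintro y (hy | ⟨hy₂, hyP⟩)
      · exact ⟨subset_convexHull ℝ _ (Set.mem_union_left _ hy), hC₁P hy⟩
      · exact ⟨convexHull_mono Set.subset_union_right hy₂, hyP⟩
    · exact (convex_convexHull ℝ _).inter hconvP
end
end

section
/- The section κ1 = K ∩ Π1 is a face of K = conv(C1 ∪ C2) if and only if C2 lies entirely in one of the closed half-spaces bounded by Π1. -/
/-! If `K` lies on one side of `Π₁`, a point of `K ∩ Π₁` inside a segment of `K` forces both
endpoints onto `Π₁`, since the defining functional is affine along the segment. Conversely, a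
segment joining points of `K` strictly on both sides of `Π₁` crosses `Π₁` in its relative
interior, so extremality of `K ∩ Π₁` keeps all of `K`, hence `C₂`, on one side. -/

noncomputable section

open Set

theorem AffineSubspace.exists_eq_setOf_apply_eq_of_finrank_direction_add_one
    {𝕜 E : Type*} [NontriviallyNormedField 𝕜] [CompleteSpace 𝕜] [NormedAddCommGroup E]
    [NormedSpace 𝕜 E] [FiniteDimensional 𝕜 E] {P : AffineSubspace 𝕜 E}
    (hP : Module.finrank 𝕜 P.direction + 1 = Module.finrank 𝕜 E) {p : E} (hp : p ∈ P) :
    ∃ f : E →L[𝕜] 𝕜, f ≠ 0 ∧ (P : Set E) = {x | f x = f p} := by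
  have hlt : P.direction < ⊤ :=
    lt_top_iff_ne_top.2 fun h ↦ by rw [h, finrank_top] at hP; omega
  obtain ⟨f, hf, hle⟩ := P.direction.exists_le_ker_of_lt_top hlt
  have hker : P.direction = LinearMap.ker f :=
    Submodule.eq_of_le_of_finrank_eq hle <| by
      have := Module.Dual.finrank_ker_add_one_of_ne_zero hf
      omega
  refine ⟨LinearMap.toContinuousLinearMap f, by simpa using hf, ?_⟩
  ext x
  rw [SetLike.mem_coe, ← AffineSubspace.vsub_right_mem_direction_iff_mem hp, hker]
  simp [sub_eq_zero]

variable {𝕜 E : Type*} [Field 𝕜] [LinearOrder 𝕜] [IsStrictOrderedRing 𝕜] [AddCommGroup E]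
  [Module 𝕜 E]

theorem isExtreme_inter_setOf_eq_of_subset_setOf_le {A : Set E} {f : E →ₗ[𝕜] 𝕜} {c : 𝕜}
    (hA : A ⊆ {x | f x ≤ c}) : IsExtreme 𝕜 A (A ∩ {x | f x = c}) := by
  refine ⟨inter_subset_left, fun x₁ hx₁ x₂ hx₂ x hx hxs ↦ ⟨hx₁, ?_⟩⟩
  obtain ⟨a, b, ha, hb, hab, rfl⟩ := hxs
  have hfx : a * f x₁ + b * f x₂ = (a + b) * c := by simpa [hab] using hx.2
  have h₂ : b * f x₂ ≤ b * c := mul_le_mul_of_nonneg_left (hA hx₂) hb.le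
  exact le_antisymm (hA hx₁) (le_of_mul_le_mul_left (by linarith) ha)

theorem IsExtreme.forall_le_or_forall_ge {A : Set E} (hA : Convex 𝕜 A) {f : E →ₗ[𝕜] 𝕜}
    {c : 𝕜} (h : IsExtreme 𝕜 A (A ∩ {x | f x = c})) :
    (∀ x ∈ A, f x ≤ c) ∨ (∀ x ∈ A, c ≤ f x) := by
  by_contra! ⟨⟨p, hp, hpc⟩, ⟨q, hq, hqc⟩⟩
  have hc : c ∈ f '' openSegment 𝕜 p q := by
    have hpq : f.toAffineMap p ≠ f.toAffineMap q := by simpa using (hqc.trans hpc).ne'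
    rw [← f.coe_toAffineMap, image_openSegment, openSegment_eq_Ioo' hpq]
    exact ⟨by simp [hqc], by simp [hpc]⟩
  obtain ⟨z, hz, hfz⟩ := hc
  exact hpc.ne' (h.2 hp hq ⟨hA.openSegment_subset hp hq hz, hfz⟩ hz).2

theorem stmt_4_general (P₁ : AffineSubspace ℝ E3) (hP₁ : IsPlane P₁) (C₁ C₂ : Set E3)
    (hC₁ : IsCircleIn P₁ C₁) :
    IsExtreme ℝ (convexHull ℝ (C₁ ∪ C₂)) (convexHull ℝ (C₁ ∪ C₂) ∩ (P₁ : Set E3))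
      ↔ ∃ (f : E3 →L[ℝ] ℝ) (c : ℝ), f ≠ 0 ∧ (P₁ : Set E3) = {x | f x = c} ∧
          ∀ x ∈ C₂, f x ≤ c := by
  obtain ⟨c₁, r₁, hc₁, -, hC₁⟩ := hC₁
  have hC₁P : C₁ ⊆ P₁ := hC₁ ▸ fun x hx ↦ hx.1
  have hdim : Module.finrank ℝ P₁.direction + 1 = Module.finrank ℝ E3 := by
    rw [hP₁, finrank_euclideanSpace_fin]
  have hC₂K : C₂ ⊆ convexHull ℝ (C₁ ∪ C₂) := subset_union_right.trans (subset_convexHull ℝ _)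
  constructor
  · intro hext
    obtain ⟨f, hf, hP⟩ :=
      AffineSubspace.exists_eq_setOf_apply_eq_of_finrank_direction_add_one hdim hc₁
    rw [hP] at hext ⊢
    rcases IsExtreme.forall_le_or_forall_ge (f := (f : E3 →ₗ[ℝ] ℝ)) (convex_convexHull ℝ _)
      hext with hle | hge
    · exact ⟨f, f c₁, hf, rfl, fun x hx ↦ hle x (hC₂K hx)⟩
    · refine ⟨-f, -f c₁, neg_ne_zero.2 hf, ?_, fun x hx ↦ neg_le_neg (hge x (hC₂K hx))⟩
      simp
  · rintro ⟨f, c, -, hP, hC₂⟩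
    rw [hP]
    have hC₁f : C₁ ⊆ {x | f x ≤ c} := fun x hx ↦ (hP.subset (hC₁P hx) : f x = c).le
    exact isExtreme_inter_setOf_eq_of_subset_setOf_le (f := (f : E3 →ₗ[ℝ] ℝ)) <|
      convexHull_min (union_subset hC₁f hC₂) (convex_halfSpace_le f.isLinear c)

/-- The section `κ₁ = K ∩ Π₁` is a face of `K = conv (C₁ ∪ C₂)` if and only if `C₂` lies
entirely in one of the closed half-spaces bounded by `Π₁`. -/
theorem stmt_4 (P₁ P₂ : AffineSubspace ℝ E3) (hP₁ : IsPlane P₁) (hP₂ : IsPlane P₂)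
    (hne : P₁ ≠ P₂) (C₁ C₂ : Set E3) (hC₁ : IsCircleIn P₁ C₁) (hC₂ : IsCircleIn P₂ C₂) :
    IsExtreme ℝ (convexHull ℝ (C₁ ∪ C₂)) (convexHull ℝ (C₁ ∪ C₂) ∩ (P₁ : Set E3))
      ↔ ∃ (f : E3 →L[ℝ] ℝ) (c : ℝ), f ≠ 0 ∧ (P₁ : Set E3) = {x | f x = c} ∧
          ∀ x ∈ C₂, f x ≤ c :=
  stmt_4_general P₁ hP₁ C₁ C₂ hC₁
end
end
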